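/- arXiv:math/0411532 — 3 statements merged into one kernel-verified Lean document; each statement's English description precedes it below -/
import Mathlib

section
/- Let g be a reductive Lie algebra over an algebraically closed field k of characteristic 0, let x = s + n be the Jordan decomposition of x ∈ g with s semisimple and n nilpotent, and let p = l ⋉ u be a parabolic subalgebra with Levi factor l = Z_g(s), the centralizer of s. Let U be the unipotent radical of the corresponding parabolic subgroup. Then the adjoint orbit of x under U equals the affine subspace x + u, i.e., {Ad(u)·x : u ∈ U} = x + u. -/
/-!
The kernel of `ad s` is `l`, so `ad s` is injective on `u`; adding the commuting nilpotent `ad n`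
keeps it injective, hence `ad x` is bijective on `u` and on each term `u_j` of the lower central
series of `u` (which `ad x` preserves, as `x ∈ p` normalizes `u`). For `z ∈ u_j` and `w ∈ x + u`
one has `Ad (exp z) w ≡ w + ⁅z, w⁆ (mod u_{j+1})`, so an element of `Ad(U) x` that agrees with
`x + y` modulo `u_j` can be corrected by a suitable `exp z` to agree modulo `u_{j+1}`. By Engel's
theorem `u` is nilpotent, so the series reaches `0`. The same expansion modulo `u` gives
`Ad(U) x ⊆ x + u`.
-/

open LieAlgebra

namespace Module.End

variable {R M : Type*} [Ring R] [AddCommGroup M] [Module R M]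

theorem eq_zero_of_pow_apply_eq_zero {A : Module.End R M} {W : Submodule R M}
    (hW : ∀ w ∈ W, A w ∈ W) (hA : ∀ w ∈ W, A w = 0 → w = 0) :
    ∀ m, ∀ v ∈ W, (A ^ m) v = 0 → v = 0
  | 0, _, _, h => h
  | m + 1, v, hv, h => hA v hv <| eq_zero_of_pow_apply_eq_zero hW hA m _ (hW v hv) <| by
      rwa [pow_succ, mul_apply] at h

theorem eq_zero_of_add_apply_eq_zero {A N : Module.End R M} (hAN : Commute A N)
    (hN : IsNilpotent N) {W : Submodule R M} (hW : ∀ w ∈ W, A w ∈ W)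
    (hA : ∀ w ∈ W, A w = 0 → w = 0) {v : M} (hv : v ∈ W) (h : (A + N) v = 0) : v = 0 := by
  obtain ⟨m, hm⟩ := hN
  refine eq_zero_of_pow_apply_eq_zero hW hA m v hv ?_
  -- `A ^ m - (-N) ^ m` is divisible by `A - (-N) = A + N`.
  have hdiv := hAN.neg_right.geom_sum₂_mul m
  rw [sub_neg_eq_add, neg_pow, hm, mul_zero, sub_zero] at hdiv
  rw [← hdiv, mul_apply, h, map_zero]

theorem exists_apply_eq_of_injOn {K V : Type*} [Field K] [AddCommGroup V] [Module K V]
    {A : Module.End K V} {W : Submodule K V} [FiniteDimensional K W]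
    (hW : ∀ w ∈ W, A w ∈ W) (hA : ∀ w ∈ W, A w = 0 → w = 0) :
    ∀ w ∈ W, ∃ v ∈ W, A v = w := by
  have hinj : Function.Injective (A.restrict hW) := by
    rw [← LinearMap.ker_eq_bot, LinearMap.ker_eq_bot']
    exact fun v hv => Subtype.ext <| hA v v.2 <| congrArg Subtype.val hv
  intro w hw
  obtain ⟨v, hv⟩ := LinearMap.surjective_of_injective hinj ⟨w, hw⟩
  exact ⟨v, v.2, congrArg Subtype.val hv⟩

end Module.End

namespace LieSubalgebra

variable {R L : Type*} [CommRing R] [LieRing L] [LieAlgebra R L] (u : LieSubalgebra R L)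

theorem mem_of_mem_lcs {j : ℕ} {b : L} (hb : b ∈ u.toLieSubmodule.lcs j) : b ∈ u :=
  LieSubmodule.lcs_le_self j _ hb

theorem lie_mem_lcs_succ {j : ℕ} {a b : L} (ha : a ∈ u) (hb : b ∈ u.toLieSubmodule.lcs j) :
    ⁅a, b⁆ ∈ u.toLieSubmodule.lcs (j + 1) := by
  rw [LieSubmodule.lcs_succ]
  exact LieSubmodule.lie_mem_lie (x := (⟨a, ha⟩ : u)) (LieSubmodule.mem_top _) hb

theorem pow_ad_apply_mem_lcs_succ {j : ℕ} {z v : L} (hz : z ∈ u.toLieSubmodule.lcs j)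
    (hv : v ∈ u) : ∀ i, (ad R L z ^ (i + 1)) v ∈ u.toLieSubmodule.lcs (j + 1)
  | 0 => by
      rw [zero_add, pow_one, ad_apply, ← lie_skew]
      exact neg_mem (u.lie_mem_lcs_succ hv hz)
  | i + 1 => by
      rw [pow_succ', Module.End.mul_apply]
      exact (u.toLieSubmodule.lcs (j + 1)).lie_mem (x := (⟨z, u.mem_of_mem_lcs hz⟩ : u))
        (pow_ad_apply_mem_lcs_succ hz hv i)

theorem lie_mem_lcs_of_forall_lie_mem {x : L} (hx : ∀ y ∈ u, ⁅x, y⁆ ∈ u) :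
    ∀ j, ∀ b ∈ u.toLieSubmodule.lcs j, ⁅x, b⁆ ∈ u.toLieSubmodule.lcs j
  | 0, b, hb => hx b hb
  | j + 1, b, hb => by
      rw [← LieSubmodule.mem_toSubmodule, LieSubmodule.lcs_succ,
        LieSubmodule.lieIdeal_oper_eq_linear_span'] at hb
      induction hb using Submodule.span_induction with
      | mem m hm =>
        obtain ⟨a, -, c, hc, rfl⟩ := hm
        rw [LieSubalgebra.coe_bracket_of_module, leibniz_lie]
        exact add_mem (u.lie_mem_lcs_succ (hx a a.2) hc)
          (u.lie_mem_lcs_succ a.2 (lie_mem_lcs_of_forall_lie_mem hx j c hc))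
      | zero => simp
      | add _ _ _ _ h₁ h₂ => rw [lie_add]; exact add_mem h₁ h₂
      | smul t _ _ h => rw [lie_smul]; exact Submodule.smul_mem _ t h

theorem exists_lcs_eq_bot [IsNoetherian R L] (h : ∀ y ∈ u, IsNilpotent (ad R L y)) :
    ∃ j, u.toLieSubmodule.lcs j = ⊥ := by
  have hL : LieModule.IsNilpotent u L :=
    (LieModule.isNilpotent_iff_forall' (R := R)).mpr fun y => h y y.2
  have : LieModule.IsNilpotent u (⊤ : LieSubmodule R u L) :=
    LieModule.isNilpotent_of_top_iff'.mpr hL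
  have hu := LieModule.isNilpotent_of_le R u L u.toLieSubmodule ⊤ le_top
  exact u.toLieSubmodule.isNilpotent_iff_exists_lcs_eq_bot.mp hu

end LieSubalgebra

theorem LieAlgebra.eq_zero_of_lie_add_eq_zero {R L : Type*} [CommRing R] [LieRing L]
    [LieAlgebra R L] {s n : L} (hsn : ⁅s, n⁆ = 0) (hn : IsNilpotent (ad R L n))
    {W : Submodule R L} (hW : ∀ w ∈ W, ⁅s, w⁆ ∈ W) (hs : ∀ w ∈ W, ⁅s, w⁆ = 0 → w = 0)
    {v : L} (hv : v ∈ W) (h : ⁅s + n, v⁆ = 0) : v = 0 := by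
  have hcomm : Commute (ad R L s) (ad R L n) :=
    LinearMap.ext fun v => by
      rw [Module.End.mul_apply, Module.End.mul_apply, ad_apply, ad_apply, leibniz_lie, hsn,
        zero_lie, zero_add]
      rfl
  refine Module.End.eq_zero_of_add_apply_eq_zero hcomm hn hW hs hv ?_
  rwa [← map_add, ad_apply]

section Orbit

variable {k g : Type*} [Field k] [LieRing g] [LieAlgebra k g] [Module.Finite k g]
  {G : Type*} [Group G] (Ad : G →* (g ≃ₗ[k] g)) (exp : g → G) (u : LieSubalgebra k g)

theorem Ad_exp_apply_sub_sub_lie_mem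
    (hAdexp : ∀ y ∈ u, ∀ z : g, Ad (exp y) z =
      ∑ i ∈ Finset.range (Module.finrank k g + 1), ((i.factorial : k))⁻¹ • ((ad k g y ^ i) z))
    {y w : g} (hy : y ∈ u) {S : Submodule k g} (hS : ∀ i, (ad k g y ^ (i + 2)) w ∈ S) :
    Ad (exp y) w - w - ⁅y, w⁆ ∈ S := by
  by_cases h0 : Module.finrank k g = 0
  · have := Module.finrank_zero_iff.mp h0
    rw [Subsingleton.elim (Ad (exp y) w - w - ⁅y, w⁆) 0]
    exact S.zero_mem
  obtain ⟨N, hN⟩ := Nat.exists_eq_add_one_of_ne_zero h0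
  rw [hAdexp y hy, hN, Finset.sum_range_succ', Finset.sum_range_succ']
  simp only [zero_add, Nat.factorial_zero, Nat.factorial_one, Nat.cast_one, inv_one, pow_zero,
    pow_one, one_smul, Module.End.one_apply, ad_apply, add_sub_cancel_right]
  exact S.sum_mem fun i _ => S.smul_mem _ (hS i)

theorem exists_sub_mem_lcs_succ
    (hAdexp : ∀ y ∈ u, ∀ z : g, Ad (exp y) z =
      ∑ i ∈ Finset.range (Module.finrank k g + 1), ((i.factorial : k))⁻¹ • ((ad k g y ^ i) z))
    {x : g} (hxu : ∀ y ∈ u, ⁅x, y⁆ ∈ u) (hinj : ∀ y ∈ u, ⁅x, y⁆ = 0 → y = 0)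
    {U : Subgroup G} (hexp : ∀ y ∈ u, exp y ∈ U) {y : g} (hy : y ∈ u) {γ : G} (hγ : γ ∈ U)
    {j : ℕ} (hγj : x + y - Ad γ x ∈ u.toLieSubmodule.lcs j) :
    ∃ γ' ∈ U, x + y - Ad γ' x ∈ u.toLieSubmodule.lcs (j + 1) := by
  set δ := x + y - Ad γ x with hδ
  have hδu : δ ∈ u := u.mem_of_mem_lcs hγj
  obtain ⟨z, hz, hxz : ⁅x, z⁆ = -δ⟩ := Module.End.exists_apply_eq_of_injOn (A := ad k g x)
    (W := u.toLieSubmodule.lcs j) (u.lie_mem_lcs_of_forall_lie_mem hxu j)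
    (fun w hw => hinj w (u.mem_of_mem_lcs hw)) (-δ) (neg_mem hγj)
  have hzu : z ∈ u := u.mem_of_mem_lcs hz
  have hyδ : y - δ ∈ u := sub_mem hy hδu
  have hzyδ : ⁅z, y - δ⁆ ∈ u.toLieSubmodule.lcs (j + 1) := by
    simpa using u.pow_ad_apply_mem_lcs_succ hz hyδ 0
  have hzγ : ⁅z, Ad γ x⁆ = δ + ⁅z, y - δ⁆ := by
    rw [show Ad γ x = x + (y - δ) by rw [hδ]; abel, lie_add, ← lie_skew, hxz, neg_neg]
  have hrest := Ad_exp_apply_sub_sub_lie_mem Ad exp u hAdexp hzu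
    (S := u.toLieSubmodule.lcs (j + 1)) (w := Ad γ x) fun i => by
      rw [pow_succ, Module.End.mul_apply, ad_apply, hzγ]
      exact u.pow_ad_apply_mem_lcs_succ hz (add_mem hδu (u.mem_of_mem_lcs hzyδ)) i
  refine ⟨exp z * γ, U.mul_mem (hexp z hzu) hγ, ?_⟩
  have hsplit : x + y - Ad (exp z * γ) x =
      -⁅z, y - δ⁆ - (Ad (exp z) (Ad γ x) - Ad γ x - ⁅z, Ad γ x⁆) := by
    rw [map_mul, LinearEquiv.mul_apply, hzγ, hδ]
    abel
  rw [hsplit]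
  exact sub_mem (neg_mem hzyδ) hrest

theorem orbit_eq_add_of_lie_injOn
    (hAdexp : ∀ y ∈ u, ∀ z : g, Ad (exp y) z =
      ∑ i ∈ Finset.range (Module.finrank k g + 1), ((i.factorial : k))⁻¹ • ((ad k g y ^ i) z))
    (huNil : ∀ y ∈ u, IsNilpotent (ad k g y)) {x : g} (hxu : ∀ y ∈ u, ⁅x, y⁆ ∈ u)
    (hinj : ∀ y ∈ u, ⁅x, y⁆ = 0 → y = 0) {U : Subgroup G} (hexp : ∀ y ∈ u, exp y ∈ U)
    (hUexp : ∀ γ ∈ U, ∃ y ∈ u, γ = exp y) :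
    {z : g | ∃ γ ∈ U, z = Ad γ x} = {z : g | ∃ y ∈ u, z = x + y} := by
  ext z
  constructor
  · rintro ⟨γ, hγ, rfl⟩
    obtain ⟨y, hy, rfl⟩ := hUexp γ hγ
    have hyx : ⁅y, x⁆ ∈ u := by
      rw [← lie_skew]
      exact neg_mem (hxu y hy)
    have hrest := Ad_exp_apply_sub_sub_lie_mem Ad exp u hAdexp hy (S := u.toSubmodule)
      (w := x) fun i => by
        rw [pow_succ, Module.End.mul_apply, ad_apply]
        exact Module.End.pow_apply_mem_of_forall_mem (i + 1) (fun v hv => u.lie_mem hy hv) _ hyx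
    exact ⟨Ad (exp y) x - x, by simpa using add_mem hrest hyx, by abel⟩
  · rintro ⟨y, hy, rfl⟩
    have hlcs (j : ℕ) : ∃ γ ∈ U, x + y - Ad γ x ∈ u.toLieSubmodule.lcs j := by
      induction j with
      | zero => exact ⟨1, U.one_mem, by simpa using hy⟩
      | succ j ih =>
        obtain ⟨γ, hγ, hγj⟩ := ih
        exact exists_sub_mem_lcs_succ Ad exp u hAdexp hxu hinj hexp hy hγ hγj
    obtain ⟨j, hj⟩ := u.exists_lcs_eq_bot huNil
    obtain ⟨γ, hγ, hγj⟩ := hlcs j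
    rw [hj, LieSubmodule.mem_bot, sub_eq_zero] at hγj
    exact ⟨γ, hγ, hγj⟩

end Orbit

theorem stmt_1_general (k : Type*) [Field k]
    (g : Type*) [LieRing g] [LieAlgebra k g] [Module.Finite k g]
    -- Jordan decomposition `x = s + n`
    (x s n : g) (hx : x = s + n)
    (hn : IsNilpotent (ad k g n)) (hsn : ⁅s, n⁆ = 0)
    -- the parabolic subalgebra `p = l ⋉ u` with Levi factor `l = Z_g(s)`
    (l u p : LieSubalgebra k g)
    (hl : (l : Set g) = {y : g | ⁅s, y⁆ = 0})
    (hsum : l.toSubmodule ⊔ u.toSubmodule = p.toSubmodule)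
    (hdisj : l.toSubmodule ⊓ u.toSubmodule = ⊥)
    (huId : ∀ a ∈ p, ∀ y ∈ u, ⁅a, y⁆ ∈ u)
    (huNil : ∀ y ∈ u, IsNilpotent (ad k g y))
    -- the group `G` acting on `g` by Lie algebra automorphisms (adjoint action)
    (G : Type*) [Group G] (Ad : G →* (g ≃ₗ[k] g))
    -- `U` is the unipotent radical of `P`: its elements are exponentials of `u`
    (U : Subgroup G) (exp : g → G)
    (hexp : ∀ y ∈ u, exp y ∈ U)
    (hUexp : ∀ γ ∈ U, ∃ y ∈ u, γ = exp y)
    (hAdexp : ∀ y ∈ u, ∀ z : g,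
      Ad (exp y) z =
        ∑ i ∈ Finset.range (Module.finrank k g + 1),
          ((i.factorial : k))⁻¹ • ((ad k g y ^ i) z)) :
    {z : g | ∃ γ ∈ U, z = Ad γ x} = {z : g | ∃ y ∈ u, z = x + y} := by
  have hlp : ∀ a ∈ l, a ∈ p := fun a ha => by
    rw [← LieSubalgebra.mem_toSubmodule, ← hsum]
    exact Submodule.mem_sup_left ha
  have hmem_l (w : g) : w ∈ l ↔ ⁅s, w⁆ = 0 := Set.ext_iff.mp hl w
  have hsp : s ∈ p := hlp s ((hmem_l s).mpr (lie_self s))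
  have hxp : x ∈ p := hx ▸ add_mem hsp (hlp n ((hmem_l n).mpr hsn))
  have hs_inj : ∀ w ∈ u, ⁅s, w⁆ = 0 → w = 0 := fun w hw hsw => by
    simpa [hdisj] using Submodule.mem_inf.mpr ⟨(hmem_l w).mpr hsw, hw⟩
  refine orbit_eq_add_of_lie_injOn Ad exp u hAdexp huNil (huId x hxp) (fun v hv hxv => ?_) hexp
    hUexp
  exact LieAlgebra.eq_zero_of_lie_add_eq_zero hsn hn (W := u.toSubmodule)
    (fun w hw => huId s hsp w hw) hs_inj hv (hx ▸ hxv)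

/-- For a Jordan decomposition `x = s + n` in a reductive Lie algebra `g`
and a parabolic subalgebra `p = l ⋉ u` with Levi factor `l = Z_g(s)`, the adjoint orbit
of `x` under the unipotent radical `U` (corresponding to `u`) is `x + u`. -/
theorem stmt_1 (k : Type*) [Field k] [IsAlgClosed k] [CharZero k]
    (g : Type*) [LieRing g] [LieAlgebra k g] [Module.Finite k g]
    -- `g` is reductive: its radical equals its center
    (hred : LieAlgebra.radical k g = LieAlgebra.center k g)
    -- Jordan decomposition `x = s + n`
    (x s n : g) (hx : x = s + n)
    (hs : (ad k g s).IsSemisimple) (hn : IsNilpotent (ad k g n)) (hsn : ⁅s, n⁆ = 0)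
    -- the parabolic subalgebra `p = l ⋉ u` with Levi factor `l = Z_g(s)`
    (l u p : LieSubalgebra k g)
    (hl : (l : Set g) = {y : g | ⁅s, y⁆ = 0})
    (hsum : l.toSubmodule ⊔ u.toSubmodule = p.toSubmodule)
    (hdisj : l.toSubmodule ⊓ u.toSubmodule = ⊥)
    (huId : ∀ a ∈ p, ∀ y ∈ u, ⁅a, y⁆ ∈ u)
    (huNil : ∀ y ∈ u, IsNilpotent (ad k g y))
    -- the group `G` acting on `g` by Lie algebra automorphisms (adjoint action)
    (G : Type*) [Group G] (Ad : G →* (g ≃ₗ[k] g))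
    (hAd : ∀ γ : G, ∀ a b : g, Ad γ ⁅a, b⁆ = ⁅Ad γ a, Ad γ b⁆)
    -- `U` is the unipotent radical of `P`: its elements are exponentials of `u`
    (U : Subgroup G) (exp : g → G)
    (hexp : ∀ y ∈ u, exp y ∈ U)
    (hUexp : ∀ γ ∈ U, ∃ y ∈ u, γ = exp y)
    (hAdexp : ∀ y ∈ u, ∀ z : g,
      Ad (exp y) z =
        ∑ i ∈ Finset.range (Module.finrank k g + 1),
          ((i.factorial : k))⁻¹ • ((ad k g y ^ i) z)) :
    {z : g | ∃ γ ∈ U, z = Ad γ x} = {z : g | ∃ y ∈ u, z = x + y} :=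
  stmt_1_general k g x s n hx hn hsn l u p hl hsum hdisj huId huNil G Ad U exp hexp hUexp hAdexp
end

section
/- Let g be a reductive Lie algebra with invariant nondegenerate bilinear form, l a Levi subalgebra, s ∈ Z_r(l) = {x ∈ Z(l) : Z_g(x) = l}, and n ∈ l nilpotent with orbit O = Ad(L)·n. Then at the point x = s + n, with T_x(Z_r(l) + O) = Z(l) + [n, l], one has Z(l)^⊥ ∩ Z_g(x) = Z_{[l,l]}(n), where ⊥ is taken with respect to the form. -/
open LieAlgebra

/-- Let `l` be a Levi subalgebra of a reductive Lie algebra `g` with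
invariant nondegenerate form `κ`, `s ∈ Z_r(l)`, and `n ∈ l` nilpotent.  At `x = s + n`,
`Z(l)^⊥ ∩ Z_g(x) = Z_{[l,l]}(n)`. -/
theorem stmt_9 (k : Type*) [Field k] [IsAlgClosed k] [CharZero k]
    (g : Type*) [LieRing g] [LieAlgebra k g] [Module.Finite k g]
    (hred : LieAlgebra.radical k g = LieAlgebra.center k g)
    -- the invariant nondegenerate symmetric bilinear form
    (κ : LinearMap.BilinForm k g)
    (hκsymm : ∀ a c : g, κ a c = κ c a)
    (hκnd : κ.Nondegenerate)
    (hκinv : ∀ a c e : g, κ ⁅a, c⁆ e = κ a ⁅c, e⁆)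
    -- `l` a Levi subalgebra: the centralizer of a semisimple element (torus)
    (l : LieSubalgebra k g)
    (hLevi : ∃ t : g, (ad k g t).IsSemisimple ∧ (l : Set g) = {y : g | ⁅t, y⁆ = 0})
    -- the derived subalgebra `[l, l]`
    (dSub : Submodule k g)
    (hd : dSub = Submodule.span k {z : g | ∃ a ∈ l, ∃ c ∈ l, z = ⁅a, c⁆})
    -- `s ∈ Z_r(l)`, `n ∈ l` nilpotent
    (s n : g)
    (hsl : s ∈ l) (hsc : ∀ w ∈ l, ⁅s, w⁆ = 0)
    (hsr : {y : g | ⁅s, y⁆ = 0} = (l : Set g))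
    (hnl : n ∈ l) (hn : IsNilpotent (ad k g n)) :
    {y : g | (∀ z : g, z ∈ l → (∀ w ∈ l, ⁅z, w⁆ = 0) → κ z y = 0) ∧ ⁅s + n, y⁆ = 0} =
      {y : g | y ∈ dSub ∧ ⁅n, y⁆ = 0} := by
  classical
  have finDim : FiniteDimensional k g := ‹Module.Finite k g›
  obtain ⟨t, htss, hlt⟩ := hLevi
  set T : Module.End k g := ad k g t with hTdef
  set A : Module.End k g := ad k g s with hAdef
  set Nn : Module.End k g := ad k g n with hNdef
  have memt : ∀ y : g, y ∈ l ↔ ⁅t, y⁆ = 0 := fun y => Set.ext_iff.mp hlt y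
  have mems : ∀ y : g, y ∈ l ↔ ⁅s, y⁆ = 0 := fun y => (Set.ext_iff.mp hsr y).symm
  have htl : t ∈ l := (memt t).mpr (lie_self t)
  have hst : ⁅s, t⁆ = 0 := hsc t htl
  have hsn : ⁅s, n⁆ = 0 := hsc n hnl
  have hcomm : ∀ a b : g, ⁅a, b⁆ = 0 → Commute (ad k g a) (ad k g b) := by
    intro a b hab
    letI := LieRing.ofAssociativeRing (A := Module.End k g)
    have h := (ad k g).map_lie a b
    rw [hab, map_zero] at h
    have h2 : ad k g a * ad k g b - ad k g b * ad k g a = 0 := by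
      rw [← Ring.lie_def]; exact h.symm
    exact sub_eq_zero.mp h2
  set L : Submodule k g := (l : Submodule k g) with hLdef
  have memL : ∀ y : g, y ∈ L ↔ y ∈ l := fun y => Iff.rfl
  have hLker_t : LinearMap.ker T = L := by
    ext y
    rw [LinearMap.mem_ker, memL, memt]
    simp [hTdef, ad_apply]
  have hLker_s : LinearMap.ker A = L := by
    ext y
    rw [LinearMap.mem_ker, memL, mems]
    simp [hAdef, ad_apply]
  -- semisimplicity: range T is a complement of ker T
  have hker_invt : LinearMap.ker T ∈ T.invtSubmodule := by
    rw [Module.End.mem_invtSubmodule T]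
    intro y hy
    rw [LinearMap.mem_ker] at hy
    simp [Submodule.mem_comap, LinearMap.mem_ker, hy]
  obtain ⟨q, hq_invt, hcompl⟩ := Module.End.isSemisimple_iff.mp htss _ hker_invt
  have hq_maps : ∀ v ∈ q, T v ∈ q := fun v hv =>
    (Module.End.mem_invtSubmodule T).mp hq_invt hv
  have hrange_le_q : LinearMap.range T ≤ q := by
    rintro _ ⟨w, rfl⟩
    obtain ⟨u, v, hu, hv, rfl⟩ := Submodule.codisjoint_iff_exists_add_eq.mp hcompl.codisjoint w
    rw [LinearMap.mem_ker] at hu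
    rw [map_add, hu, zero_add]
    exact hq_maps v hv
  have hrange_eq : LinearMap.range T = q := by
    apply Submodule.eq_of_le_of_finrank_le hrange_le_q
    have h1 := LinearMap.finrank_range_add_finrank_ker T
    have h2 := Submodule.finrank_add_eq_of_isCompl hcompl
    omega
  have hcompl2 : IsCompl (LinearMap.ker T) (LinearMap.range T) := hrange_eq ▸ hcompl
  -- commuting endomorphisms
  have hAcommT : Commute A T := hcomm s t hst
  have hAcommN : Commute A Nn := hcomm s n hsn
  -- A y always lies in range T
  have hA_range : ∀ y : g, A y ∈ LinearMap.range T := by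
    intro y
    obtain ⟨u, v, hu, hv, rfl⟩ :=
      Submodule.codisjoint_iff_exists_add_eq.mp hcompl2.codisjoint y
    have hu0 : A u = 0 := by
      rw [← LinearMap.mem_ker, hLker_s, ← hLker_t]; exact hu
    obtain ⟨w, rfl⟩ := hv
    rw [map_add, hu0, zero_add]
    refine ⟨A w, ?_⟩
    have := congrFun (congrArg DFunLike.coe hAcommT) w
    simpa [Module.End.mul_apply] using this.symm
  have hA2 : ∀ y : g, A (A y) = 0 → A y = 0 := by
    intro y h
    have h1 : A y ∈ LinearMap.ker T := by
      rw [hLker_t, ← hLker_s, LinearMap.mem_ker]; exact h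
    have h2 : A y ∈ LinearMap.range T := hA_range y
    have := hcompl2.disjoint.le_bot ⟨h1, h2⟩
    simpa using this
  have hApow : ∀ (m : ℕ) (y : g), (A ^ (m + 1)) y = 0 → A y = 0 := by
    intro m
    induction m with
    | zero => intro y h; simpa using h
    | succ m ih =>
      intro y h
      have h2 : (A ^ (m + 1)) (A y) = 0 := by
        rw [← Module.End.mul_apply, ← pow_succ]; exact h
      exact hA2 y (ih (A y) h2)
  -- Jordan splitting of the centralizer condition
  have hsplit : ∀ y : g, ⁅s + n, y⁆ = 0 → ⁅s, y⁆ = 0 ∧ ⁅n, y⁆ = 0 := by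
    intro y hy
    obtain ⟨m, hm⟩ := hn
    have hm' : Nn ^ (m + 1) = 0 := by
      rw [pow_succ]
      rw [hNdef] at hm ⊢
      rw [hm, zero_mul]
    have hsum : A y + Nn y = 0 := by
      have : ⁅s, y⁆ + ⁅n, y⁆ = 0 := by rw [← add_lie]; exact hy
      simpa [hAdef, hNdef, ad_apply] using this
    have hyA : A y = - Nn y := eq_neg_of_add_eq_zero_left hsum
    have hswap1 : ∀ v : g, A (Nn v) = Nn (A v) := by
      intro v
      have := congrFun (congrArg DFunLike.coe hAcommN) v
      simpa [Module.End.mul_apply] using this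
    have key : A (A y) = - Nn (A y) := by
      conv_lhs => rw [hyA]
      rw [map_neg, hswap1]
    have hj : ∀ j : ℕ, (A ^ j) (A y) = ((-1 : k) ^ j) • ((Nn ^ j) (A y)) := by
      intro j
      induction j with
      | zero => simp
      | succ j ih =>
        have hcp : A * Nn ^ j = Nn ^ j * A := hAcommN.pow_right j
        have hswap : ∀ v : g, A ((Nn ^ j) v) = (Nn ^ j) (A v) := by
          intro v
          have := congrFun (congrArg DFunLike.coe hcp) v
          simpa [Module.End.mul_apply] using this
        calc (A ^ (j + 1)) (A y) = A ((A ^ j) (A y)) := by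
              rw [pow_succ']; simp [Module.End.mul_apply]
          _ = A (((-1 : k) ^ j) • ((Nn ^ j) (A y))) := by rw [ih]
          _ = ((-1 : k) ^ j) • (A ((Nn ^ j) (A y))) := by rw [map_smul]
          _ = ((-1 : k) ^ j) • ((Nn ^ j) (A (A y))) := by rw [hswap]
          _ = ((-1 : k) ^ j) • ((Nn ^ j) (- Nn (A y))) := by rw [key]
          _ = ((-1 : k) ^ (j + 1)) • ((Nn ^ (j + 1)) (A y)) := by
              rw [map_neg, smul_neg, pow_succ (-1 : k), pow_succ Nn]
              simp [Module.End.mul_apply, mul_smul]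
    have hAAy : A (A y) = 0 := by
      have h0 : (A ^ (m + 1)) (A y) = 0 := by
        rw [hj (m + 1), hm']
        simp
      exact hApow m (A y) h0
    have hAy : A y = 0 := hA2 y hAAy
    have hNy : Nn y = 0 := by
      have := hsum
      rw [hAy, zero_add] at this
      exact this
    constructor
    · simpa [hAdef, ad_apply] using hAy
    · simpa [hNdef, ad_apply] using hNy
  -- orthogonality of l and range T
  have hLV : ∀ x ∈ l, ∀ v ∈ LinearMap.range T, κ x v = 0 := by
    rintro x hx _ ⟨w, rfl⟩
    have hxt : ⁅x, t⁆ = 0 := by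
      have h := (memt x).mp hx
      rw [← lie_skew, h, neg_zero]
    have : κ x (T w) = κ ⁅x, t⁆ w := by
      rw [hκinv x t w, hTdef, ad_apply]
    rw [this, hxt]
    simp
  -- the restriction of κ to L is nondegenerate
  set B : LinearMap.BilinForm k L := κ.restrict L with hBdef
  have hBapply : ∀ x y : L, B x y = κ x y := fun x y => rfl
  have hBrefl : B.IsRefl := by
    intro x y h
    rw [hBapply] at h ⊢
    rw [hκsymm]; exact h
  have hBnd : B.Nondegenerate := by
    refine (LinearMap.IsRefl.nondegenerate_iff_separatingLeft hBrefl).mpr ?_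
    rintro ⟨v, hv⟩ hv0
    have hallw : ∀ w : g, κ v w = 0 := by
      intro w
      obtain ⟨u, x, hu, hx, rfl⟩ :=
        Submodule.codisjoint_iff_exists_add_eq.mp hcompl2.codisjoint w
      have huL : u ∈ L := by rw [← hLker_t]; exact hu
      have h1 : κ v u = 0 := hv0 ⟨u, huL⟩
      have h2 : κ v x = 0 := hLV v ((memL v).mp hv) x hx
      rw [map_add, h1, h2, add_zero]
    have : v = 0 := hκnd.1 v hallw
    exact Subtype.ext this
  have hdle : dSub ≤ L := by
    rw [hd]
    apply Submodule.span_le.mpr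
    rintro z ⟨a, ha, c, hc, rfl⟩
    exact (memL _).mpr (l.lie_mem ha hc)
  set D : Submodule k L := dSub.comap L.subtype with hDdef
  -- elements orthogonal to D (inside L) are central in l
  have horthD : ∀ z : L, z ∈ B.orthogonal D → ∀ w ∈ l, ⁅(z : g), w⁆ = 0 := by
    intro z hz w hw
    have hzl : (z : g) ∈ l := (memL _).mp z.2
    have hmem : ⁅(z : g), w⁆ ∈ L := (memL _).mpr (l.lie_mem hzl hw)
    have hzero : ∀ u : L, B ⟨⁅(z : g), w⁆, hmem⟩ u = 0 := by
      rintro ⟨u, hu⟩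
      rw [hBapply]
      have hgen : ⁅w, u⁆ ∈ dSub := by
        rw [hd]
        exact Submodule.subset_span ⟨w, hw, u, (memL u).mp hu, rfl⟩
      have hwuL : ⁅w, u⁆ ∈ L := hdle hgen
      have hdz := hz ⟨⁅w, u⁆, hwuL⟩ (by simpa [hDdef] using hgen)
      have hdz' : κ ⁅w, u⁆ (z : g) = 0 := hdz
      calc κ ⁅(z : g), w⁆ u = κ (z : g) ⁅w, u⁆ := hκinv _ _ _
        _ = κ ⁅w, u⁆ (z : g) := hκsymm _ _
        _ = 0 := hdz'
    have := hBnd.1 ⟨⁅(z : g), w⁆, hmem⟩ hzero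
    exact Subtype.ext_iff.mp this
  have hcent_perp : ∀ z : g, (∀ w ∈ l, ⁅z, w⁆ = 0) → ∀ x ∈ dSub, κ z x = 0 := by
    intro z hzc x hx
    rw [hd] at hx
    induction hx using Submodule.span_induction with
    | mem x hx =>
      obtain ⟨a, ha, c, hc, rfl⟩ := hx
      have h := hκinv z a c
      rw [← h, hzc a ha]
      simp
    | zero => simp
    | add x₁ x₂ hx₁ hx₂ ih₁ ih₂ => rw [map_add, ih₁, ih₂, add_zero]
    | smul r x hx ih => rw [map_smul, ih, smul_zero]
  -- main set equality
  ext y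
  simp only [Set.mem_setOf_eq]
  constructor
  · rintro ⟨hy1, hy2⟩
    obtain ⟨hys, hyn⟩ := hsplit y hy2
    have hyl : y ∈ l := (mems y).mpr hys
    have hyL : y ∈ L := (memL y).mpr hyl
    refine ⟨?_, hyn⟩
    have hymem : (⟨y, hyL⟩ : L) ∈ B.orthogonal (B.orthogonal D) := by
      rw [LinearMap.BilinForm.mem_orthogonal_iff]
      intro z hz
      have hzl : (z : g) ∈ l := (memL _).mp z.2
      exact hy1 z hzl (horthD z hz)
    rw [LinearMap.BilinForm.orthogonal_orthogonal hBnd hBrefl] at hymem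
    simpa [hDdef] using hymem
  · rintro ⟨hyd, hyn⟩
    have hyl : y ∈ l := (memL y).mp (hdle hyd)
    refine ⟨fun z _ hzc => hcent_perp z hzc y hyd, ?_⟩
    rw [add_lie, hsc y hyl, hyn, add_zero]
end

section
/- Let G be a reductive algebraic group with Lie algebra g, P = L ⋉ U a parabolic with opposite unipotent radical U₋, l = Lie(L), u = Lie(U). For d_i = (ū_i, u_i, z_i, n_i) ∈ U₋ × U × Z_r(l) × l_nil (i = 1,2) with π(d_i) = Ad(ū_i u_i)(z_i + n_i) equal, the element s = u₁⁻¹ū₁⁻¹ū₂u₂ normalizes L, because Ad(s)·z₂ = z₁ with z₁, z₂ ∈ Z_r(l). -/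
/-!
Write `x = z + n` with `z ∈ Z_r(l)` and `n ∈ l` ad-nilpotent. The generalized kernel of `ad x`
does not see the commuting nilpotent part, so it is the generalized kernel of `ad z`; and since
`ad z` commutes with the semisimple `ad t` defining `l` and has the same kernel `l`, that
generalized kernel is `l` itself. Thus `l` is recovered from `x` alone, and `Ad s`, which maps
`z₂ + n₂` to `z₁ + n₁` and intertwines the adjoint actions, maps `l` onto `l`.
-/

open LieAlgebra

namespace Module.End

variable {R M : Type*} [CommRing R] [AddCommGroup M] [Module R M]

lemma maxGenEigenspace_zero_eq_top_of_isNilpotent {n : End R M} (hn : IsNilpotent n) :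
    n.maxGenEigenspace 0 = ⊤ := by
  obtain ⟨m, hm⟩ := hn
  exact eq_top_iff.mpr fun v _ => (mem_maxGenEigenspace n 0 v).mpr ⟨m, by simp [hm]⟩

lemma maxGenEigenspace_zero_le_add {f n : End R M} (hfn : Commute f n) (hn : IsNilpotent n) :
    f.maxGenEigenspace 0 ≤ (f + n).maxGenEigenspace 0 := fun v hv => by
  have := genEigenspace_inf_le_add f n 0 0 ⊤ ⊤ hfn
    ⟨hv, (maxGenEigenspace_zero_eq_top_of_isNilpotent hn).ge Submodule.mem_top⟩
  simpa using this

lemma maxGenEigenspace_zero_add_of_isNilpotent {f n : End R M} (hfn : Commute f n)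
    (hn : IsNilpotent n) : (f + n).maxGenEigenspace 0 = f.maxGenEigenspace 0 := by
  refine le_antisymm ?_ (maxGenEigenspace_zero_le_add hfn hn)
  simpa using maxGenEigenspace_zero_le_add ((hfn.add_left (Commute.refl n)).neg_right) hn.neg

lemma maxGenEigenspace_zero_le_of_commute_of_ker_le {f g : End R M} (hfg : Commute f g)
    (hker : LinearMap.ker g ≤ LinearMap.ker f) :
    g.maxGenEigenspace 0 ≤ f.maxGenEigenspace 0 := by
  suffices ∀ (m : ℕ) (v : M), (g ^ m) v = 0 → (f ^ m) v = 0 from fun v hv => by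
    obtain ⟨m, hm⟩ := (mem_maxGenEigenspace g 0 v).mp hv
    exact (mem_maxGenEigenspace f 0 v).mpr ⟨m, by simpa using this m v (by simpa using hm)⟩
  intro m
  induction m with
  | zero => simp
  | succ m ih =>
    intro v hv
    have hgfv : g ((f ^ m) v) = 0 := by
      rw [← mul_apply, ← (hfg.pow_left m).eq, mul_apply,
        ih (g v) (by rwa [← mul_apply, ← pow_succ])]
    rw [pow_succ', mul_apply]
    exact hker hgfv

lemma maxGenEigenspace_zero_eq_ker_of_isSemisimple {f g : End R M} (hf : f.IsSemisimple)
    (hfg : Commute f g) (hker : LinearMap.ker f = LinearMap.ker g) :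
    g.maxGenEigenspace 0 = LinearMap.ker g := by
  refine le_antisymm ?_ (by simpa using g.genEigenspace_le_maximal 0 1)
  calc g.maxGenEigenspace 0 ≤ f.maxGenEigenspace 0 :=
        maxGenEigenspace_zero_le_of_commute_of_ker_le hfg hker.ge
    _ = LinearMap.ker g := by
        rw [hf.isFinitelySemisimple.maxGenEigenspace_eq_eigenspace, eigenspace_zero, hker]

lemma mem_maxGenEigenspace_iff_of_semiconj (e : M ≃ₗ[R] M) {f g : End R M}
    (h : ∀ v, e (f v) = g (e v)) (μ : R) (v : M) :
    e v ∈ g.maxGenEigenspace μ ↔ v ∈ f.maxGenEigenspace μ := by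
  have hpow : ∀ m : ℕ, ((g - μ • 1) ^ m) (e v) = e (((f - μ • 1) ^ m) v) := fun m =>
    LinearMap.congr_fun (commute_pow_left_of_commute (f := e.toLinearMap)
      (g := f - μ • 1) (g₂ := g - μ • 1) (by ext w; simp [h]) m) v
  simp only [mem_maxGenEigenspace, hpow, LinearEquiv.map_eq_zero_iff]

end Module.End

section Levi

variable {R L : Type*} [CommRing R] [LieRing L] [LieAlgebra R L]

lemma commute_ad_of_lie_eq_zero {x y : L} (h : ⁅x, y⁆ = 0) :
    Commute (ad R L x) (ad R L y) := by
  refine LinearMap.ext fun w => ?_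
  simp [leibniz_lie x y w, h]

lemma mem_maxGenEigenspace_ad_add_iff {t z n : L} {l : LieSubalgebra R L}
    (hts : (ad R L t).IsSemisimple) (htl : (l : Set L) = {y | ⁅t, y⁆ = 0})
    (hzl : {y : L | ⁅z, y⁆ = 0} = (l : Set L)) (hnl : n ∈ l) (hn : IsNilpotent (ad R L n))
    (y : L) : y ∈ (ad R L (z + n)).maxGenEigenspace 0 ↔ y ∈ l := by
  have hz : ∀ w, ⁅z, w⁆ = 0 ↔ w ∈ l := fun w => Set.ext_iff.mp hzl w
  have ht : ∀ w, ⁅t, w⁆ = 0 ↔ w ∈ l := fun w => (Set.ext_iff.mp htl w).symm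
  have hker : LinearMap.ker (ad R L t) = LinearMap.ker (ad R L z) := by
    ext w; simp [ht, hz]
  rw [map_add, Module.End.maxGenEigenspace_zero_add_of_isNilpotent
    (commute_ad_of_lie_eq_zero ((hz n).mpr hnl)) hn,
    Module.End.maxGenEigenspace_zero_eq_ker_of_isSemisimple hts
      (commute_ad_of_lie_eq_zero ((ht z).mpr ((hz z).mp (lie_self z)))) hker,
    LinearMap.mem_ker, ad_apply, hz]

end Levi

theorem stmt_10_general (k : Type*) [Field k]
    (g : Type*) [LieRing g] [LieAlgebra k g]
    -- the reductive group `G` acting on `g` by Lie algebra automorphisms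
    (G : Type*) [Group G] (Ad : G →* (g ≃ₗ[k] g))
    (hAd : ∀ γ : G, ∀ a c : g, Ad γ ⁅a, c⁆ = ⁅Ad γ a, Ad γ c⁆)
    -- the Levi subgroup `L` (connected, with Lie algebra `l`), and the unipotent
    -- radicals `U`, `U₋` of the parabolic and its opposite
    (L : Subgroup G) (l : LieSubalgebra k g)
    (hLevi : ∃ t : g, (ad k g t).IsSemisimple ∧ (l : Set g) = {y : g | ⁅t, y⁆ = 0})
    -- `L` is connected with Lie algebra `l`: anything preserving `l` normalizes `L`
    (hNorm : ∀ γ : G, (∀ y : g, y ∈ l ↔ Ad γ y ∈ l) → γ ∈ Subgroup.normalizer (L : Set G))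
    -- the data `d₁`, `d₂`
    (ub₁ ub₂ u₁ u₂ : G)
    (z₁ z₂ n₁ n₂ : g)
    (hz₁r : {y : g | ⁅z₁, y⁆ = 0} = (l : Set g))
    (hz₂r : {y : g | ⁅z₂, y⁆ = 0} = (l : Set g))
    (hn₁ : n₁ ∈ l) (hn₁nil : IsNilpotent (ad k g n₁))
    (hn₂ : n₂ ∈ l) (hn₂nil : IsNilpotent (ad k g n₂))
    -- `π(d₁) = π(d₂)`
    (heq : Ad (ub₁ * u₁) (z₁ + n₁) = Ad (ub₂ * u₂) (z₂ + n₂)) :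
    u₁⁻¹ * ub₁⁻¹ * ub₂ * u₂ ∈ Subgroup.normalizer (L : Set G) := by
  obtain ⟨t, hts, htl⟩ := hLevi
  have hs : u₁⁻¹ * ub₁⁻¹ * ub₂ * u₂ = (ub₁ * u₁)⁻¹ * (ub₂ * u₂) := by group
  have hAds : Ad (u₁⁻¹ * ub₁⁻¹ * ub₂ * u₂) (z₂ + n₂) = z₁ + n₁ := by
    rw [hs, map_mul, LinearEquiv.mul_apply, ← heq, map_inv]
    exact (Ad (ub₁ * u₁)).symm_apply_apply _
  refine hNorm _ fun y => ?_
  rw [← mem_maxGenEigenspace_ad_add_iff hts htl hz₂r hn₂ hn₂nil,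
    ← mem_maxGenEigenspace_ad_add_iff hts htl hz₁r hn₁ hn₁nil, ← hAds]
  exact (Module.End.mem_maxGenEigenspace_iff_of_semiconj _ (hAd _ _) 0 y).symm

/-- For `dᵢ = (ūᵢ, uᵢ, zᵢ, nᵢ) ∈ U₋ × U × Z_r(l) × l_nil` (`i = 1, 2`)
with `π(d₁) = π(d₂)`, i.e. `Ad(ū₁u₁)(z₁ + n₁) = Ad(ū₂u₂)(z₂ + n₂)`, the element
`s = u₁⁻¹ ū₁⁻¹ ū₂ u₂` normalizes `L` (since `Ad(s)·z₂ = z₁` with `z₁, z₂ ∈ Z_r(l)`,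
and any `γ` with `Ad(γ)·l = l` normalizes the connected group `L` with Lie algebra
`l`). -/
theorem stmt_10 (k : Type*) [Field k] [IsAlgClosed k] [CharZero k]
    (g : Type*) [LieRing g] [LieAlgebra k g] [Module.Finite k g]
    (hred : LieAlgebra.radical k g = LieAlgebra.center k g)
    -- the reductive group `G` acting on `g` by Lie algebra automorphisms
    (G : Type*) [Group G] (Ad : G →* (g ≃ₗ[k] g))
    (hAd : ∀ γ : G, ∀ a c : g, Ad γ ⁅a, c⁆ = ⁅Ad γ a, Ad γ c⁆)
    -- the Levi subgroup `L` (connected, with Lie algebra `l`), and the unipotent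
    -- radicals `U`, `U₋` of the parabolic and its opposite
    (L U Uneg : Subgroup G) (l : LieSubalgebra k g)
    (hLevi : ∃ t : g, (ad k g t).IsSemisimple ∧ (l : Set g) = {y : g | ⁅t, y⁆ = 0})
    -- `L` is connected with Lie algebra `l`: anything preserving `l` normalizes `L`
    (hNorm : ∀ γ : G, (∀ y : g, y ∈ l ↔ Ad γ y ∈ l) → γ ∈ Subgroup.normalizer (L : Set G))
    -- the data `d₁`, `d₂`
    (ub₁ ub₂ u₁ u₂ : G)
    (hub₁ : ub₁ ∈ Uneg) (hub₂ : ub₂ ∈ Uneg) (hu₁ : u₁ ∈ U) (hu₂ : u₂ ∈ U)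
    (z₁ z₂ n₁ n₂ : g)
    (hz₁l : z₁ ∈ l) (hz₁c : ∀ w ∈ l, ⁅z₁, w⁆ = 0)
    (hz₁r : {y : g | ⁅z₁, y⁆ = 0} = (l : Set g))
    (hz₂l : z₂ ∈ l) (hz₂c : ∀ w ∈ l, ⁅z₂, w⁆ = 0)
    (hz₂r : {y : g | ⁅z₂, y⁆ = 0} = (l : Set g))
    (hn₁ : n₁ ∈ l) (hn₁nil : IsNilpotent (ad k g n₁))
    (hn₂ : n₂ ∈ l) (hn₂nil : IsNilpotent (ad k g n₂))
    -- `π(d₁) = π(d₂)`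
    (heq : Ad (ub₁ * u₁) (z₁ + n₁) = Ad (ub₂ * u₂) (z₂ + n₂)) :
    u₁⁻¹ * ub₁⁻¹ * ub₂ * u₂ ∈ Subgroup.normalizer (L : Set G) :=
  stmt_10_general k g G Ad hAd L l hLevi hNorm ub₁ ub₂ u₁ u₂ z₁ z₂ n₁ n₂ hz₁r hz₂r hn₁ hn₁nil hn₂
    hn₂nil heq
end
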